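/- arXiv:1509.06194 — 7 statements merged into one kernel-verified Lean document; each statement's English description precedes it below -/
import Mathlib

section
/- For each integer k ≥ 1, the polynomial x^{k+1} - 2x^k + x - 1 has a unique root in the open interval (1,2). -/
/-!
Dividing by `x ^ k`, the roots of `x ^ (k + 1) - 2 x ^ k + x - 1` on `(0, ∞)` are the zeros of
`g x = x - 2 + (x - 1) / x ^ k`. Its derivative is `(x ^ (k + 1) + x - k (x - 1)) / x ^ (k + 1)`,
whose numerator is at least `2 x` by Bernoulli's inequality, so `g` is strictly increasing and
there is at most one positive root. A root in `(1, 2)` exists by the intermediate value theorem,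
the polynomial taking the values `-1` at `1` and `1` at `2`.
-/

open Set

lemma hasDerivAt_sub_one_div_pow (k : ℕ) {x : ℝ} (hx : x ≠ 0) :
    HasDerivAt (fun x : ℝ => (x - 1) / x ^ k) ((x - k * (x - 1)) / x ^ (k + 1)) x := by
  refine (((hasDerivAt_id x).sub_const 1).div (hasDerivAt_pow k x)
    (pow_ne_zero k hx)).congr_deriv ?_
  rcases k with _ | k
  · simp [hx]
  · simp only [id, Nat.add_sub_cancel]
    field_simp
    push_cast
    ring

lemma pow_succ_add_sub_mul_sub_one_pos (k : ℕ) {x : ℝ} (hx : 0 < x) :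
    0 < x ^ (k + 1) + x - k * (x - 1) := by
  have bernoulli := one_add_mul_le_pow (show (-2 : ℝ) ≤ x - 1 by linarith) (k + 1)
  rw [add_sub_cancel] at bernoulli
  push_cast at bernoulli
  linarith

lemma strictMonoOn_sub_two_add_sub_one_div_pow (k : ℕ) :
    StrictMonoOn (fun x : ℝ => x - 2 + (x - 1) / x ^ k) (Ioi 0) := by
  have hderiv : ∀ x ∈ Ioi (0 : ℝ), HasDerivAt (fun x : ℝ => x - 2 + (x - 1) / x ^ k)
      (1 + (x - k * (x - 1)) / x ^ (k + 1)) x := fun x hx =>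
    ((hasDerivAt_id x).sub_const 2).add (hasDerivAt_sub_one_div_pow k (ne_of_gt hx))
  refine strictMonoOn_of_hasDerivWithinAt_pos (convex_Ioi 0)
    (fun x hx => (hderiv x hx).continuousAt.continuousWithinAt)
    (fun x hx => (hderiv x (interior_subset hx)).hasDerivWithinAt) fun x hx => ?_
  rw [interior_Ioi] at hx
  have : x ≠ 0 := hx.ne'
  calc (0 : ℝ) < (x ^ (k + 1) + x - k * (x - 1)) / x ^ (k + 1) :=
        div_pos (pow_succ_add_sub_mul_sub_one_pos k hx) (pow_pos hx _)
    _ = 1 + (x - k * (x - 1)) / x ^ (k + 1) := by field_simp; ring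

lemma eq_of_pow_succ_sub_two_mul_pow_add_sub_one_eq_zero (k : ℕ) {x y : ℝ} (hx : 0 < x)
    (hy : 0 < y) (hpx : x ^ (k + 1) - 2 * x ^ k + x - 1 = 0)
    (hpy : y ^ (k + 1) - 2 * y ^ k + y - 1 = 0) : x = y := by
  have hg : ∀ z : ℝ, 0 < z → z ^ (k + 1) - 2 * z ^ k + z - 1 = 0 →
      z - 2 + (z - 1) / z ^ k = 0 := by
    intro z hz hpz
    have : z ^ k ≠ 0 := pow_ne_zero k hz.ne'
    field_simp
    linear_combination hpz
  exact (strictMonoOn_sub_two_add_sub_one_div_pow k).injOn hx hy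
    ((hg x hx hpx).trans (hg y hy hpy).symm)

lemma exists_mem_Ioo_pow_succ_sub_two_mul_pow_add_sub_one_eq_zero (k : ℕ) :
    ∃ x ∈ Ioo (1 : ℝ) 2, x ^ (k + 1) - 2 * x ^ k + x - 1 = 0 :=
  intermediate_value_Ioo (by norm_num) (by fun_prop) ⟨by norm_num, by ring_nf; norm_num⟩

theorem unique_root_alpha_general (k : ℕ) :
    ∃! x : ℝ, x ∈ Set.Ioo (1:ℝ) 2 ∧ x^(k+1) - 2*x^k + x - 1 = 0 := by
  obtain ⟨x, hx, hpx⟩ := exists_mem_Ioo_pow_succ_sub_two_mul_pow_add_sub_one_eq_zero k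
  refine ⟨x, ⟨hx, hpx⟩, fun y ⟨hy, hpy⟩ => ?_⟩
  exact eq_of_pow_succ_sub_two_mul_pow_add_sub_one_eq_zero k (one_pos.trans hy.1)
    (one_pos.trans hx.1) hpy hpx

theorem unique_root_alpha (k : ℕ) (hk : 1 ≤ k) :
    ∃! x : ℝ, x ∈ Set.Ioo (1:ℝ) 2 ∧ x^(k+1) - 2*x^k + x - 1 = 0 :=
  unique_root_alpha_general k
end

section
/- For every integer k ≥ 1 we have α_k ≤ γ_k ≤ η_k, where α_k, γ_k, η_k are the unique roots in (1,2) of x^{k+1}-2x^k+x-1, x^{k+1}-x^k-⋯-x-1, and 2x^{k+1}-4x^k+1 respectively. -/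
/-!
For `y > 0` the ratio `(∑ i < n, y ^ i) / y ^ n = ∑ j ∈ [1, n], y⁻¹ ^ j` is strictly decreasing, and
`γ` is where it equals `1`; so `x ≤ γ` iff `x ^ (k + 1) ≤ ∑ i ≤ k, x ^ i`. For `x > 1` the geometric
sum turns this into `1 ≤ x ^ (k + 1) * (2 - x)`. The equations of `α` and `η` give
`α ^ (k + 1) * (2 - α) = α (α - 1) ≥ 1` (as `α ^ k ≥ α` forces `α ^ 2 ≥ α + 1`) and
`η ^ (k + 1) * (2 - η) = η / 2 < 1`.
-/

open Finset

section GeomSum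

variable {R : Type*} [CommRing R] [LinearOrder R] [IsStrictOrderedRing R] {n : ℕ} {x y : R}

theorem pow_mul_geom_sum_lt_pow_mul_geom_sum (hn : 0 < n) (hy : 0 < y) (hyx : y < x) :
    y ^ n * ∑ i ∈ range n, x ^ i < x ^ n * ∑ i ∈ range n, y ^ i := by
  rw [mul_sum, mul_sum]
  refine sum_lt_sum_of_nonempty (nonempty_range_iff.mpr hn.ne') fun i hi => ?_
  obtain ⟨m, rfl⟩ := Nat.exists_eq_add_of_lt (mem_range.mp hi)
  calc y ^ (i + m + 1) * x ^ i = y ^ (m + 1) * (x * y) ^ i := by ring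
    _ < x ^ (m + 1) * (x * y) ^ i :=
        mul_lt_mul_of_pos_right (pow_lt_pow_left₀ hyx hy.le m.succ_ne_zero)
          (pow_pos (mul_pos (hy.trans hyx) hy) i)
    _ = x ^ (i + m + 1) * y ^ i := by ring

theorem le_of_pow_le_geom_sum (hn : 0 < n) (hy : 0 < y)
    (hy_root : y ^ n = ∑ i ∈ range n, y ^ i) (hx : x ^ n ≤ ∑ i ∈ range n, x ^ i) : x ≤ y := by
  by_contra! hyx
  have := pow_mul_geom_sum_lt_pow_mul_geom_sum hn hy hyx
  rw [← hy_root, mul_comm (x ^ n)] at this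
  exact hx.not_gt (lt_of_mul_lt_mul_left this (pow_nonneg hy.le n))

theorem le_of_geom_sum_le_pow (hn : 0 < n) (hx : 0 < x)
    (hy_root : y ^ n = ∑ i ∈ range n, y ^ i) (h : ∑ i ∈ range n, x ^ i ≤ x ^ n) : y ≤ x := by
  by_contra! hxy
  have := pow_mul_geom_sum_lt_pow_mul_geom_sum hn hx hxy
  rw [← hy_root, mul_comm (x ^ n)] at this
  exact h.not_gt (lt_of_mul_lt_mul_left this (pow_nonneg (hx.trans hxy).le n))

theorem geom_sum_lt_pow_iff (hx : 1 < x) :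
    ∑ i ∈ range n, x ^ i < x ^ n ↔ x ^ n * (2 - x) < 1 := by
  have hx1 : 0 < x - 1 := sub_pos.mpr hx
  rw [← mul_lt_mul_iff_of_pos_right hx1, geom_sum_mul]
  constructor <;> intro h <;> linarith

end GeomSum

theorem alpha_le_gamma_le_eta (k : ℕ) (hk : 1 ≤ k) (α γ η : ℝ)
    (hα : α ∈ Set.Ioo (1:ℝ) 2 ∧ α^(k+1) - 2*α^k + α - 1 = 0)
    (hγ : γ ∈ Set.Ioo (1:ℝ) 2 ∧ γ^(k+1) - ∑ i ∈ Finset.range (k+1), γ^i = 0)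
    (hη : η ∈ Set.Ioo (1:ℝ) 2 ∧ 2*η^(k+1) - 4*η^k + 1 = 0) :
    α ≤ γ ∧ γ ≤ η := by
  obtain ⟨⟨hα1, hα2⟩, hα_root⟩ := hα
  obtain ⟨⟨hγ1, -⟩, hγ_root⟩ := hγ
  obtain ⟨⟨hη1, hη2⟩, hη_root⟩ := hη
  rw [sub_eq_zero] at hγ_root
  have hα_eq : α ^ k * (2 - α) = α - 1 := by linear_combination pow_succ α k - hα_root
  have hη_eq : η ^ k * (2 - η) = 1 / 2 := by linear_combination pow_succ η k - hη_root / 2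
  constructor
  · refine le_of_pow_le_geom_sum k.add_one_pos (by linarith) hγ_root ?_
    rw [← not_lt, geom_sum_lt_pow_iff hα1, not_lt]
    have hα_sq : α + 1 ≤ α ^ 2 := by
      nlinarith [le_self_pow₀ hα1.le (by omega : k ≠ 0)]
    calc 1 ≤ α * (α - 1) := by nlinarith
      _ = α ^ (k + 1) * (2 - α) := by rw [← hα_eq]; ring
  · refine le_of_geom_sum_le_pow k.add_one_pos (by linarith) hγ_root ?_
    refine ((geom_sum_lt_pow_iff hη1).mpr ?_).le
    calc η ^ (k + 1) * (2 - η) = η * (η ^ k * (2 - η)) := by ring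
      _ < 1 := by rw [hη_eq]; linarith
end

section
/- Let β ∈ (1,2) and k ≥ 1. Then β ≤ γ_k if and only if (T_1^k ∘ T_0)(1/β) ≤ 1/β, where γ_k is the k-th multinacci number, T_0(x) = βx and T_1(x) = βx − 1. -/
/-!
Since `T0 β (1/β) = 1` and `T1 β y ≤ 0 ↔ y ≤ 1/β`, the condition says `(T1 β)^[k+1] 1 ≤ 0`, and
`(T1 β)^[k+1] 1 = β^(k+1) - ∑_{i ≤ k} β^i`. Dividing this polynomial by `x^(k+1)` gives
`1 - ∑_{i ≤ k} x^(i-k-1)`, which is strictly increasing on `x > 0` and vanishes at `γ`; so its sign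
at `β` decides whether `β ≤ γ`.
-/

def T0 (β x : ℝ) : ℝ := β * x
def T1 (β x : ℝ) : ℝ := β * x - 1

open Finset Set

lemma T0_one_div {β : ℝ} (hβ : β ≠ 0) : T0 β (1 / β) = 1 :=
  mul_one_div_cancel hβ

lemma T1_nonpos_iff {β : ℝ} (hβ : 0 < β) {y : ℝ} : T1 β y ≤ 0 ↔ y ≤ 1 / β := by
  rw [T1, sub_nonpos, le_div_iff₀ hβ, mul_comm]

lemma iterate_T1_apply (β : ℝ) (n : ℕ) (x : ℝ) :
    (T1 β)^[n] x = β ^ n * x - ∑ i ∈ range n, β ^ i := by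
  induction n generalizing x with
  | zero => simp
  | succ n ih =>
    rw [Function.iterate_succ_apply, ih, sum_range_succ, T1]
    ring

lemma pow_div_pow_lt_of_lt {a b : ℝ} (ha : 0 < a) (hab : a < b) {i n : ℕ} (hin : i < n) :
    b ^ i / b ^ n < a ^ i / a ^ n := by
  have hb : 0 < b := ha.trans hab
  have inv_pow_sub : ∀ c : ℝ, c ≠ 0 → c ^ i / c ^ n = (c ^ (n - i))⁻¹ := fun c hc => by
    rw [pow_sub₀ c hc hin.le, ← div_eq_mul_inv, inv_div]
  rw [inv_pow_sub b hb.ne', inv_pow_sub a ha.ne']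
  exact inv_strictAnti₀ (pow_pos ha _) (pow_lt_pow_left₀ hab ha.le (by omega))

lemma strictMonoOn_multinacci_div_pow (k : ℕ) :
    StrictMonoOn (fun x : ℝ => (x ^ (k + 1) - ∑ i ∈ range (k + 1), x ^ i) / x ^ (k + 1))
      (Ioi 0) := by
  intro a (ha : 0 < a) b (hb : 0 < b) hab
  simp only [sub_div, sum_div, div_self (pow_pos ha _).ne', div_self (pow_pos hb _).ne']
  refine sub_lt_sub_left ?_ 1
  exact sum_lt_sum_of_nonempty nonempty_range_add_one fun i hi =>
    pow_div_pow_lt_of_lt ha hab (mem_range.mp hi)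

lemma le_iff_multinacci_nonpos {β γ : ℝ} (hβ : 0 < β) (hγ : 0 < γ) {k : ℕ}
    (hroot : γ ^ (k + 1) - ∑ i ∈ range (k + 1), γ ^ i = 0) :
    β ≤ γ ↔ β ^ (k + 1) - ∑ i ∈ range (k + 1), β ^ i ≤ 0 := by
  rw [← (strictMonoOn_multinacci_div_pow k).le_iff_le hβ hγ]
  simp only [hroot, zero_div, div_le_iff₀ (pow_pos hβ _), zero_mul]

theorem le_gamma_iff_general (β : ℝ) (hβ : β ∈ Set.Ioo (1:ℝ) 2) (k : ℕ)
    (γ : ℝ) (hγ : γ ∈ Set.Ioo (1:ℝ) 2)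
    (hroot : γ^(k+1) - ∑ i ∈ Finset.range (k+1), γ^i = 0) :
    β ≤ γ ↔ (T1 β)^[k] (T0 β (1/β)) ≤ 1/β := by
  have hβ0 : 0 < β := one_pos.trans hβ.1
  rw [le_iff_multinacci_nonpos hβ0 (one_pos.trans hγ.1) hroot, T0_one_div hβ0.ne',
    ← T1_nonpos_iff hβ0, ← Function.iterate_succ_apply' (T1 β), iterate_T1_apply, mul_one]

theorem le_gamma_iff (β : ℝ) (hβ : β ∈ Set.Ioo (1:ℝ) 2) (k : ℕ) (hk : 1 ≤ k)
    (γ : ℝ) (hγ : γ ∈ Set.Ioo (1:ℝ) 2)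
    (hroot : γ^(k+1) - ∑ i ∈ Finset.range (k+1), γ^i = 0) :
    β ≤ γ ↔ (T1 β)^[k] (T0 β (1/β)) ≤ 1/β :=
  le_gamma_iff_general β hβ k γ hγ hroot
end

section
/- Let β = (1+√5)/2 and i ≥ 2. Then the set B_i^0 = {x ∈ [1/β, 1] : T_0(x) > 1, T_1^j(T_0(x)) > 1 for all 1 ≤ j ≤ i−2, and T_1^{i-1}(T_0(x)) ∈ (1/β, 1]} equals the interval (∑_{n=2}^{i+1} β^{-n}, ∑_{n=2}^{i+2} β^{-n}]. -/
/-!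
For the golden ratio `φ` the orbit is affine in `x`: `T₁^k (T₀ x) = φ^(k+1) (x - 1) + φ`, because
`φ² = φ + 1`. Since `φ - 1 = φ⁻¹` and `φ - φ⁻¹ = 1`, the conditions `T₁^k (T₀ x) > 1` and
`T₁^k (T₀ x) > φ⁻¹` become `x > 1 - φ⁻ᵏ⁻²` and `x > 1 - φ⁻ᵏ⁻¹`, while `T₁^k (T₀ x) ≤ 1` becomes
`x ≤ 1 - φ⁻ᵏ⁻²`. So the last condition alone cuts out `(1 - φ⁻ⁱ, 1 - φ⁻ⁱ⁻¹]`, and it implies all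
the earlier ones because the thresholds `1 - φ⁻ᵏ⁻²` increase with `k`. Finally
`φ⁻² + ⋯ + φ⁻ᵐ⁻¹ = 1 - φ⁻ᵐ`, as `φ⁻ⁿ⁻² = φ⁻ⁿ - φ⁻ⁿ⁻¹`.
-/

open Real goldenRatio Finset

lemma inv_goldenRatio_eq_sub_one : φ⁻¹ = φ - 1 := by
  rw [inv_goldenRatio, ← one_sub_goldenConj]
  ring

lemma inv_goldenRatio_sq : φ⁻¹ ^ 2 = 1 - φ⁻¹ := by
  rw [inv_goldenRatio_eq_sub_one]
  linear_combination goldenRatio_sq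

lemma sum_Icc_two_inv_goldenRatio_pow (m : ℕ) :
    ∑ n ∈ Icc 2 (m + 1), φ⁻¹ ^ n = 1 - φ⁻¹ ^ m := by
  induction m with
  | zero => simp
  | succ m ih =>
    rw [sum_Icc_succ_top (by omega), ih]
    linear_combination φ⁻¹ ^ m * inv_goldenRatio_sq

lemma iterate_T1_T0_goldenRatio (k : ℕ) (x : ℝ) :
    (T1 φ)^[k] (T0 φ x) = φ ^ (k + 1) * (x - 1) + φ := by
  induction k with
  | zero => simp only [Function.iterate_zero_apply, T0]; ring
  | succ k ih =>
    rw [Function.iterate_succ_apply', ih, T1]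
    linear_combination goldenRatio_sq

lemma goldenRatio_pow_mul_inv_pow (n : ℕ) : φ ^ n * φ⁻¹ ^ n = 1 := by
  rw [← mul_pow, mul_inv_cancel₀ goldenRatio_ne_zero, one_pow]

lemma iterate_T1_T0_goldenRatio_eq_add_one (k : ℕ) (x : ℝ) :
    (T1 φ)^[k] (T0 φ x) = φ ^ (k + 1) * (x - (1 - φ⁻¹ ^ (k + 2))) + 1 := by
  rw [iterate_T1_T0_goldenRatio]
  linear_combination -inv_goldenRatio_eq_sub_one - φ⁻¹ * goldenRatio_pow_mul_inv_pow (k + 1)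

lemma iterate_T1_T0_goldenRatio_eq_add_inv (k : ℕ) (x : ℝ) :
    (T1 φ)^[k] (T0 φ x) = φ ^ (k + 1) * (x - (1 - φ⁻¹ ^ (k + 1))) + φ⁻¹ := by
  rw [iterate_T1_T0_goldenRatio]
  linear_combination -inv_goldenRatio_eq_sub_one - goldenRatio_pow_mul_inv_pow (k + 1)

lemma one_lt_iterate_T1_T0_goldenRatio_iff (k : ℕ) (x : ℝ) :
    1 < (T1 φ)^[k] (T0 φ x) ↔ 1 - φ⁻¹ ^ (k + 2) < x := by
  rw [iterate_T1_T0_goldenRatio_eq_add_one, lt_add_iff_pos_left,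
    mul_pos_iff_of_pos_left (pow_pos goldenRatio_pos _), sub_pos]

lemma iterate_T1_T0_goldenRatio_le_one_iff (k : ℕ) (x : ℝ) :
    (T1 φ)^[k] (T0 φ x) ≤ 1 ↔ x ≤ 1 - φ⁻¹ ^ (k + 2) := by
  rw [← not_lt, one_lt_iterate_T1_T0_goldenRatio_iff, not_lt]

lemma inv_goldenRatio_lt_iterate_T1_T0_iff (k : ℕ) (x : ℝ) :
    φ⁻¹ < (T1 φ)^[k] (T0 φ x) ↔ 1 - φ⁻¹ ^ (k + 1) < x := by
  rw [iterate_T1_T0_goldenRatio_eq_add_inv, lt_add_iff_pos_left,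
    mul_pos_iff_of_pos_left (pow_pos goldenRatio_pos _), sub_pos]

lemma one_sub_inv_goldenRatio_pow_le {m n : ℕ} (h : m ≤ n) :
    1 - φ⁻¹ ^ m ≤ 1 - φ⁻¹ ^ n := by
  have := pow_le_pow_of_le_one (inv_pos.2 goldenRatio_pos).le
    (inv_lt_one_of_one_lt₀ one_lt_goldenRatio).le h
  linarith

lemma one_lt_iterate_T1_T0_goldenRatio {j i : ℕ} (hji : j + 2 ≤ i) {x : ℝ}
    (hx : 1 - φ⁻¹ ^ i < x) : 1 < (T1 φ)^[j] (T0 φ x) :=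
  (one_lt_iterate_T1_T0_goldenRatio_iff j x).2
    ((one_sub_inv_goldenRatio_pow_le hji).trans_lt hx)

theorem B0_interval (β : ℝ) (hβ : β = (1 + Real.sqrt 5)/2) (i : ℕ) (hi : 2 ≤ i) :
    {x : ℝ | x ∈ Set.Icc (1/β) 1 ∧ T0 β x > 1 ∧
        (∀ j : ℕ, 1 ≤ j → j ≤ i - 2 → (T1 β)^[j] (T0 β x) > 1) ∧
        (T1 β)^[i-1] (T0 β x) ∈ Set.Ioc (1/β) 1} =
      Set.Ioc (∑ n ∈ Finset.Icc 2 (i+1), (1/β)^n) (∑ n ∈ Finset.Icc 2 (i+2), (1/β)^n) := by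
  obtain rfl : β = φ := hβ
  obtain ⟨k, rfl⟩ : ∃ k, i = k + 1 := ⟨i - 1, by omega⟩
  simp only [one_div, sum_Icc_two_inv_goldenRatio_pow, show k + 1 + 2 = k + 2 + 1 from rfl,
    add_tsub_cancel_right]
  ext x
  simp only [Set.mem_ofPred_eq, Set.mem_Icc, Set.mem_Ioc, gt_iff_lt,
    inv_goldenRatio_lt_iterate_T1_T0_iff, iterate_T1_T0_goldenRatio_le_one_iff]
  refine ⟨fun ⟨_, _, _, hlast⟩ ↦ hlast, fun ⟨hlow, hhigh⟩ ↦ ⟨⟨?_, ?_⟩, ?_, ?_, hlow, hhigh⟩⟩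
  · have := one_sub_inv_goldenRatio_pow_le (m := 2) (n := k + 1) (by omega)
    rw [inv_goldenRatio_sq, sub_sub_cancel] at this
    linarith
  · linarith [pow_pos (inv_pos.2 goldenRatio_pos) (k + 2)]
  · exact one_lt_iterate_T1_T0_goldenRatio (j := 0) (by omega) hlow
  · intro j _ hj
    exact one_lt_iterate_T1_T0_goldenRatio (by omega) hlow
end

section
/- Let β = (1+√5)/2 and i ≥ 2. The map T_1^{i-1} ∘ T_0 (where T_0(x)=βx, T_1(x)=βx−1) maps the interval (∑_{n=2}^{i+1} β^{-n}, ∑_{n=2}^{i+2} β^{-n}] bijectively onto (1/β, 1]. -/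
/-!
The composite `f = T₁^[i-1] ∘ T₀` is the affine map `x ↦ β^i x - (1 + β + ⋯ + β^(i-2))` with
positive slope, so it maps the interval `(L, R]` bijectively onto `(f L, f R]`. Multiplying the sums by `β^i`
shows `f L = 1/β` for every `β ≠ 0`, while `f R = 1/β + 1/β²`, which equals `1` exactly because
`β` is the golden ratio.
-/

open Finset

theorem Set.bijOn_affine_Ioc {𝕜 : Type*} [Field 𝕜] [LinearOrder 𝕜] [IsStrictOrderedRing 𝕜]
    {a : 𝕜} (ha : 0 < a) (b c d : 𝕜) :
    Set.BijOn (fun x ↦ a * x + b) (Set.Ioc c d) (Set.Ioc (a * c + b) (a * d + b)) := by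
  let e := (OrderIso.mulLeft₀ a ha).trans (OrderIso.addRight b)
  have h := e.injective.injOn.bijOn_image (s := Set.Ioc c d)
  rwa [e.image_Ioc] at h

theorem pow_mul_one_div_pow_add {K : Type*} [Field K] {β : K} (hβ : β ≠ 0) (m k : ℕ) :
    β ^ m * (1 / β) ^ (m + k) = (1 / β) ^ k := by
  rw [pow_add, ← mul_assoc, ← mul_pow, mul_one_div_cancel hβ, one_pow, one_mul]

theorem T1_iterate (β x : ℝ) (m : ℕ) :
    (T1 β)^[m] x = β ^ m * x - ∑ k ∈ range m, β ^ k := by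
  induction m with
  | zero => simp
  | succ m ih =>
    rw [Function.iterate_succ_apply', ih, T1, geom_sum_succ]
    ring

theorem T1_iterate_comp_T0 (β : ℝ) (m : ℕ) :
    (T1 β)^[m] ∘ T0 β = fun x ↦ β ^ (m + 1) * x + -∑ k ∈ range m, β ^ k := by
  funext x
  rw [Function.comp_apply, T1_iterate, T0]
  ring

theorem pow_mul_sum_Icc_one_div_pow {K : Type*} [Field K] {β : K} (hβ : β ≠ 0) (m : ℕ) :
    β ^ (m + 1) * ∑ n ∈ Icc 2 (m + 2), (1 / β) ^ n = ∑ k ∈ range m, β ^ k + 1 / β := by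
  induction m with
  | zero => simpa using pow_mul_one_div_pow_add hβ 1 1
  | succ m ih =>
    rw [sum_Icc_succ_top (by omega), mul_add, pow_mul_one_div_pow_add hβ (m + 2) 1, pow_succ,
      mul_comm _ β, mul_assoc, ih, geom_sum_succ, mul_add, mul_one_div_cancel hβ]
    ring

theorem Real.one_div_goldenRatio_add_sq : 1 / goldenRatio + (1 / goldenRatio) ^ 2 = 1 := by
  rw [one_div, inv_goldenRatio, neg_sq, goldenConj_sq]
  ring

theorem B0_full_branch (β : ℝ) (hβ : β = (1 + Real.sqrt 5)/2) (i : ℕ) (hi : 2 ≤ i) :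
    Set.BijOn ((T1 β)^[i-1] ∘ T0 β)
      (Set.Ioc (∑ n ∈ Finset.Icc 2 (i+1), (1/β)^n) (∑ n ∈ Finset.Icc 2 (i+2), (1/β)^n))
      (Set.Ioc (1/β) 1) := by
  obtain ⟨m, rfl⟩ : ∃ m, i = m + 1 := ⟨i - 1, by omega⟩
  have hβ0 : 0 < β := hβ ▸ Real.goldenRatio_pos
  have hleft :
      β ^ (m + 1) * ∑ n ∈ Icc 2 (m + 2), (1 / β) ^ n + -∑ k ∈ range m, β ^ k = 1 / β := by
    rw [pow_mul_sum_Icc_one_div_pow hβ0.ne']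
    ring
  have hgold : 1 / β + (1 / β) ^ 2 = 1 := by
    rw [hβ]
    exact Real.one_div_goldenRatio_add_sq
  have hright : β ^ (m + 1) * ∑ n ∈ Icc 2 (m + 3), (1 / β) ^ n + -∑ k ∈ range m, β ^ k = 1 := by
    rw [sum_Icc_succ_top (by omega), mul_add, pow_mul_sum_Icc_one_div_pow hβ0.ne',
      pow_mul_one_div_pow_add hβ0.ne' (m + 1) 2]
    linear_combination hgold
  have haffine := Set.bijOn_affine_Ioc (pow_pos hβ0 (m + 1)) (-∑ k ∈ range m, β ^ k)
    (∑ n ∈ Icc 2 (m + 2), (1 / β) ^ n) (∑ n ∈ Icc 2 (m + 3), (1 / β) ^ n)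
  rwa [hleft, hright, ← T1_iterate_comp_T0] at haffine
end

section
/- Let β ∈ (1,2) with β ∉ (α_k, γ_k] for all k ≥ 2 and β > (1+√5)/2. Then there exists k ≥ 1 such that (T_1^k ∘ T_0)(1/β) ∈ (1/β, 1/(β(β−1))], where T_0(x)=βx, T_1(x)=βx−1, α_k is the unique root in (1,2) of x^{k+1}−2x^k+x−1, and γ_k is the k-th multinacci number. -/
theorem first_return_lands_inside (β : ℝ) (hβ : β ∈ Set.Ioo (1:ℝ) 2)
    (hgold : β > (1 + Real.sqrt 5)/2)
    (hout : ∀ k : ℕ, 2 ≤ k → ∀ α γ : ℝ,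
      α ∈ Set.Ioo (1:ℝ) 2 → α^(k+1) - 2*α^k + α - 1 = 0 →
      γ ∈ Set.Ioo (1:ℝ) 2 → γ^(k+1) - ∑ i ∈ Finset.range (k+1), γ^i = 0 →
      β ∉ Set.Ioc α γ) :
    ∃ k : ℕ, 1 ≤ k ∧ (T1 β)^[k] (T0 β (1/β)) ∈ Set.Ioc (1/β) (1/(β*(β-1))) := by
  obtain ⟨hb1, hb2⟩ := hβ
  have hb0 : (0:ℝ) < β := by linarith
  have hbm1 : (0:ℝ) < β - 1 := by linarith
  -- closed form for the orbit
  have hf : ∀ k : ℕ, (T1 β)^[k] (T0 β (1/β)) = (β^(k+1) - 2*β^k + 1)/(β-1) := by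
    intro k
    induction k with
    | zero =>
      simp [T0, T1]
      field_simp
      ring
    | succ n ih =>
      rw [Function.iterate_succ_apply', ih]
      simp only [T1]
      field_simp
      ring
  -- predicate Q k : p_{k+1}(β) ≤ 0
  classical
  set Q : ℕ → Prop := fun k => 1 ≤ k ∧ β^(k+2) - 2*β^(k+1) + β - 1 ≤ 0 with hQ
  have hQex : ∃ k, Q k := by
    obtain ⟨n, hn⟩ := pow_unbounded_of_one_lt ((β-1)/(2-β)) hb1
    refine ⟨n + 1, Nat.le_add_left 1 n, ?_⟩
    have hmono : β ^ n ≤ β ^ (n + 2) := pow_le_pow_right₀ hb1.le (by omega)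
    have h2b : (0:ℝ) < 2 - β := by linarith
    rw [div_lt_iff₀ h2b] at hn
    have h3 : β - 1 < β ^ (n + 2) * (2 - β) := by nlinarith
    have hps : β ^ (n + 1 + 2) = β ^ (n + 2) * β := by ring
    rw [hps]
    nlinarith [h3]
  set k := Nat.find hQex with hkdef
  have hk1 : 1 ≤ k := (Nat.find_spec hQex).1
  have hkle : β^(k+2) - 2*β^(k+1) + β - 1 ≤ 0 := (Nat.find_spec hQex).2
  -- lower bound: β^(k+2) - 2β^(k+1) + 1 > 0
  have hlow : 0 < β^(k+2) - 2*β^(k+1) + 1 := by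
    rcases eq_or_lt_of_le hk1 with h1 | h2
    · -- k = 1 : use golden ratio hypothesis
      have hk : k = 1 := h1.symm
      rw [hk]
      have h5 : Real.sqrt 5 ^ 2 = 5 := Real.sq_sqrt (by norm_num)
      have h5' : (0:ℝ) ≤ Real.sqrt 5 := Real.sqrt_nonneg 5
      have hq : β^2 - β - 1 > 0 := by nlinarith
      have : β^(1+2) - 2*β^(1+1) + 1 = (β - 1) * (β^2 - β - 1) := by ring
      rw [this]
      positivity
    · -- k ≥ 2 : use hout with IVT
      have hk2 : 2 ≤ k := h2
      by_contra hcon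
      push_neg at hcon
      -- minimality: p_k(β) > 0
      have hlt : k - 1 < k := by omega
      rw [hkdef] at hlt
      have hmin : ¬ Q (k - 1) := Nat.find_min hQex hlt
      rw [hQ] at hmin
      have he : k - 1 + 2 = k + 1 := by omega
      have he2 : k - 1 + 1 = k := by omega
      have hpk : 0 < β^(k+1) - 2*β^k + β - 1 := by
        by_contra hle
        push_neg at hle
        exact hmin ⟨by omega, by rw [he, he2]; linarith⟩
      -- IVT for α : root of p_k in (1, β)
      have hF : ContinuousOn (fun x : ℝ => x^(k+1) - 2*x^k + x - 1) (Set.Icc 1 β) := by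
        fun_prop
      have hsub := intermediate_value_Ioo hb1.le hF
      have h0mem : (0:ℝ) ∈ Set.Ioo ((1:ℝ)^(k+1) - 2*1^k + 1 - 1) (β^(k+1) - 2*β^k + β - 1) := by
        constructor
        · simp
        · exact hpk
      obtain ⟨α, hαmem, hαroot⟩ := hsub h0mem
      -- IVT for γ : root of q_k in [β, 2)
      have hqβ : β^(k+1) - ∑ i ∈ Finset.range (k+1), β^i ≤ 0 := by
        have hsum : ∑ i ∈ Finset.range (k+1), β^i = (β^(k+1) - 1)/(β-1) :=
          geom_sum_eq (by linarith) (k+1)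
        rw [hsum, sub_nonpos, le_div_iff₀ hbm1]
        nlinarith [hcon, pow_succ β (k+1)]
      have hG : ContinuousOn (fun x : ℝ => x^(k+1) - ∑ i ∈ Finset.range (k+1), x^i)
          (Set.Icc β 2) := by fun_prop
      have hsubG := intermediate_value_Ico hb2.le hG
      have hG2 : (2:ℝ)^(k+1) - ∑ i ∈ Finset.range (k+1), (2:ℝ)^i = 1 := by
        rw [geom_sum_eq (by norm_num : (2:ℝ) ≠ 1) (k+1)]
        norm_num
      have h0memG : (0:ℝ) ∈ Set.Ico (β^(k+1) - ∑ i ∈ Finset.range (k+1), β^i)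
          ((2:ℝ)^(k+1) - ∑ i ∈ Finset.range (k+1), (2:ℝ)^i) := by
        rw [hG2]; exact ⟨hqβ, by norm_num⟩
      obtain ⟨γ, hγmem, hγroot⟩ := hsubG h0memG
      exact hout k hk2 α γ ⟨hαmem.1, lt_trans hαmem.2 hb2⟩ hαroot
        ⟨lt_of_lt_of_le hb1 hγmem.1, hγmem.2⟩ hγroot ⟨hαmem.2, hγmem.1⟩
  -- conclude
  refine ⟨k, hk1, ?_⟩
  rw [hf k]
  constructor
  · rw [div_lt_div_iff₀ hb0 hbm1]
    nlinarith [hlow, pow_succ β (k+1), pow_succ β k]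
  · have hstep : (β^(k+1) - 2*β^k + 1) * β ≤ 1 := by
      nlinarith [hkle, pow_succ β (k+1), pow_succ β k]
    rw [div_le_div_iff₀ hbm1 (by positivity : (0:ℝ) < β*(β-1))]
    nlinarith [mul_le_mul_of_nonneg_right hstep hbm1.le]
end

section
/- Let β ∈ ((1+√5)/2, 2). The intervals D_n = T_1^{-n}(S), n ≥ 1, are pairwise disjoint and contained in (1/(β(β−1)), 1/(β−1)), where T_1(x) = βx − 1 and S = [1/β, 1/(β(β−1))]. -/
def Dset (β : ℝ) (n : ℕ) : Set ℝ := (T1 β)^[n] ⁻¹' Set.Icc (1/β) (1/(β*(β-1)))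

open Real goldenRatio

lemma one_lt_mul_sub_one_of_goldenRatio_lt {β : ℝ} (hβ : φ < β) : 1 < β * (β - 1) :=
  calc 1 = φ * (φ - 1) := by linear_combination (-1/4) * sq_sqrt (show (0:ℝ) ≤ 5 by norm_num)
    _ < β * (β - 1) := by gcongr; linarith [one_lt_goldenRatio]

lemma T1_iterate_apply {β : ℝ} (hβ : β ≠ 1) (n : ℕ) (x : ℝ) :
    (T1 β)^[n] x = 1/(β-1) - β^n * (1/(β-1) - x) := by
  have : β - 1 ≠ 0 := sub_ne_zero.mpr hβ
  induction n with
  | zero => simp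
  | succ n ih =>
    rw [Function.iterate_succ_apply', ih, T1]
    field_simp
    ring

lemma one_div_sub_one_sub_one_div {β : ℝ} (hβ : 1 < β) : 1/(β-1) - 1/β = 1/(β*(β-1)) := by
  field_simp [(by linarith : β - 1 ≠ 0)]
  ring

section

variable {β : ℝ} (hβ : 1 < β)
include hβ

lemma mem_Dset_iff {n : ℕ} {x : ℝ} :
    x ∈ Dset β n ↔ β^n * (1/(β-1) - x) ∈ Set.Icc (1/β) (1/(β*(β-1))) := by
  have hp := one_div_sub_one_sub_one_div hβ
  simp only [Dset, Set.mem_preimage, T1_iterate_apply hβ.ne', Set.mem_Icc]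
  constructor <;> rintro ⟨h₁, h₂⟩ <;> constructor <;> linarith

lemma Dset_subset_Ioo (hgold : 1 < β * (β - 1)) {n : ℕ} (hn : n ≠ 0) :
    Dset β n ⊆ Set.Ioo (1/(β*(β-1))) (1/(β-1)) := by
  intro x hx
  obtain ⟨hlow, hupp⟩ := (mem_Dset_iff hβ).mp hx
  have hc : 1/(β*(β-1)) < 1 := (div_lt_one (by linarith)).mpr hgold
  have hβ₀ : 0 < β := by linarith
  have hpos : 0 < 1/(β-1) - x := pos_of_mul_pos_right (hlow.trans_lt' (by positivity)) (by positivity)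
  have hsmall : β * (1/(β-1) - x) < 1 :=
    calc β * (1/(β-1) - x) ≤ β^n * (1/(β-1) - x) := by gcongr; exact le_self_pow₀ hβ.le hn
      _ < 1 := by linarith
  have hp := one_div_sub_one_sub_one_div hβ
  have : 1/(β-1) - x < 1/β := by rwa [lt_div_iff₀ (by linarith), mul_comm]
  constructor <;> linarith

lemma Dset_disjoint_of_lt (hgold : 1 < β * (β - 1)) {m n : ℕ} (hmn : m < n) :
    Disjoint (Dset β m) (Dset β n) := by
  refine Set.disjoint_left.mpr fun x hxm hxn => ?_
  obtain ⟨hm, -⟩ := (mem_Dset_iff hβ).mp hxm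
  obtain ⟨-, hn⟩ := (mem_Dset_iff hβ).mp hxn
  have hc : 1/(β*(β-1)) < 1 := (div_lt_one (by linarith)).mpr hgold
  have : 1 ≤ β^n * (1/(β-1) - x) :=
    calc 1 = β * (1/β) := by field_simp
      _ ≤ β^(n-m) * (β^m * (1/(β-1) - x)) := by
          gcongr
          exact le_self_pow₀ hβ.le (by omega)
      _ = β^n * (1/(β-1) - x) := by rw [← mul_assoc, ← pow_add, Nat.sub_add_cancel hmn.le]
  linarith

end

theorem Dn_disjoint_and_right (β : ℝ) (hβ : β ∈ Set.Ioo ((1 + Real.sqrt 5)/2) 2) :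
    (∀ n : ℕ, 1 ≤ n → Dset β n ⊆ Set.Ioo (1/(β*(β-1))) (1/(β-1))) ∧
    (∀ m n : ℕ, 1 ≤ m → 1 ≤ n → m ≠ n → Disjoint (Dset β m) (Dset β n)) := by
  have hgold : 1 < β * (β - 1) := one_lt_mul_sub_one_of_goldenRatio_lt hβ.1
  have hβ₁ : 1 < β := one_lt_goldenRatio.trans hβ.1
  refine ⟨fun n hn => Dset_subset_Ioo hβ₁ hgold (by omega), fun m n _ _ hmn => ?_⟩
  rcases hmn.lt_or_gt with h | h
  · exact Dset_disjoint_of_lt hβ₁ hgold h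
  · exact (Dset_disjoint_of_lt hβ₁ hgold h).symm
end
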